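/- arXiv:2201.04708 — 5 statements merged into one kernel-verified Lean document; each statement's English description precedes it below -/
import Mathlib

section
/- For every rational number t with t ∉ {−1, 0, 1}, the eight points O, (0,0), (−1,0), (−t²,0), (−t, t(t−1)), (−t, −t(t−1)), (t, t(t+1)), (t, −t(t+1)) all lie on E_t(ℚ), and they form a subgroup of E_t(ℚ) isomorphic to ℤ/2ℤ × ℤ/4ℤ. -/
open WeierstrassCurve WeierstrassCurve.Affine

noncomputable section

/-- The elliptic curve `E_t : y² = x(x+1)(x+t²) = x³ + (1+t²)x² + t²x` over `ℚ`. -/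
def Ecurve (t : ℚ) : WeierstrassCurve.Affine ℚ :=
  { a₁ := 0, a₂ := 1 + t ^ 2, a₃ := 0, a₄ := t ^ 2, a₆ := 0 }

/-- The coordinates of the seven affine points of `A_t`. -/
def Acoords (t : ℚ) : Set (ℚ × ℚ) :=
  {(0, 0), (-1, 0), (-t ^ 2, 0), (-t, t * (t - 1)), (-t, -(t * (t - 1))),
    (t, t * (t + 1)), (t, -(t * (t + 1)))}

/-- The subset `A_t` of `E_t(ℚ)`: the point at infinity together with the seven affine
points whose coordinates lie in `Acoords t`. -/
def Aset (t : ℚ) : Set (Ecurve t).Point :=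
  {P | P = 0 ∨ ∃ (x y : ℚ) (h : (Ecurve t).Nonsingular x y),
    (x, y) ∈ Acoords t ∧ P = Point.some x y h}

/-!
The discriminant of `E_t` is `16 t⁴ (t - 1)² (t + 1)²`, so for `t ∉ {0, ±1}` every rational
solution of `y² = x(x+1)(x+t²)` is a nonsingular point. With `T = (0,0)`, `Q = (-1,0)`,
`R = (-t²,0)`, `P = (-t, t(t-1))` and `S = (t, t(t+1))`, the chord-tangent formulas give
`2P = T`, `Q + P = S` and `Q + T = R`. As `T` and `Q` are `2`-torsion, `P` has order `4` and
`(a, b) ↦ aQ + bP` is a homomorphism `ℤ/2 × ℤ/4 → E_t(ℚ)`. Its values `O, P, T, -P, Q, S, R, -S`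
are exactly the eight listed points (`-P = (-t, -t(t-1))`, `-S = (t, -t(t+1))`), and all but
the first are affine, so it is injective.
-/

section ZModProd

variable {G : Type*} [AddCommGroup G] {m n : ℕ}

def zmodProdHom (q p : G) (hq : m • q = 0) (hp : n • p = 0) : ZMod m × ZMod n →+ G :=
  (ZMod.lift m ⟨zmultiplesHom G q, by simpa using hq⟩).coprod
    (ZMod.lift n ⟨zmultiplesHom G p, by simpa using hp⟩)

variable [NeZero m] [NeZero n] {q p : G} (hq : m • q = 0) (hp : n • p = 0)

lemma zmodProdHom_apply (a : ZMod m) (b : ZMod n) :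
    zmodProdHom q p hq hp (a, b) = a.val • q + b.val • p := by
  conv_lhs => rw [← ZMod.natCast_zmod_val a, ← ZMod.natCast_zmod_val b, ← Int.cast_natCast a.val,
    ← Int.cast_natCast b.val]
  simp only [zmodProdHom, AddMonoidHom.coprod_apply, ZMod.lift_coe, zmultiplesHom_apply,
    natCast_zsmul]

lemma mem_range_zmodProdHom {x : G} :
    x ∈ (zmodProdHom q p hq hp).range ↔ ∃ i < m, ∃ j < n, i • q + j • p = x := by
  constructor
  · rintro ⟨⟨a, b⟩, rfl⟩
    exact ⟨a.val, a.val_lt, b.val, b.val_lt, (zmodProdHom_apply hq hp a b).symm⟩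
  · rintro ⟨i, hi, j, hj, rfl⟩
    exact ⟨(i, j), by rw [zmodProdHom_apply, ZMod.val_cast_of_lt hi, ZMod.val_cast_of_lt hj]⟩

lemma injective_zmodProdHom (h : ∀ i < m, ∀ j < n, i • q + j • p = 0 → i = 0 ∧ j = 0) :
    Function.Injective (zmodProdHom q p hq hp) := by
  rw [injective_iff_map_eq_zero]
  rintro ⟨a, b⟩ hab
  rw [zmodProdHom_apply] at hab
  obtain ⟨ha, hb⟩ := h _ a.val_lt _ b.val_lt hab
  rw [ZMod.val_eq_zero] at ha hb
  rw [ha, hb, Prod.mk_zero_zero]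

end ZModProd

namespace Ecurve

lemma equation_iff {t x y : ℚ} :
    (Ecurve t).Equation x y ↔ y ^ 2 = x * (x + 1) * (x + t ^ 2) := by
  rw [Affine.equation_iff]
  simp only [Ecurve]
  constructor <;> intro h <;> linear_combination h

lemma Δ_eq (t : ℚ) : (Ecurve t).Δ = 16 * t ^ 4 * (t - 1) ^ 2 * (t + 1) ^ 2 := by
  simp only [Ecurve, WeierstrassCurve.Δ, b₂, b₄, b₆, b₈]
  ring

lemma isElliptic_iff {t : ℚ} : (Ecurve t).IsElliptic ↔ t ≠ 0 ∧ t ≠ 1 ∧ t ≠ -1 := by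
  rw [WeierstrassCurve.isElliptic_iff, isUnit_iff_ne_zero, Δ_eq]
  simp only [ne_eq, mul_eq_zero, OfNat.ofNat_ne_zero, not_false_eq_true, pow_eq_zero_iff,
    false_or, sub_eq_zero, add_eq_zero_iff_eq_neg, not_or]
  tauto

variable {t : ℚ} [(Ecurve t).IsElliptic]

lemma nonsingular {x y : ℚ} (h : y ^ 2 = x * (x + 1) * (x + t ^ 2)) :
    (Ecurve t).Nonsingular x y :=
  equation_iff_nonsingular.mp (equation_iff.mpr h)

variable (t)

def T : (Ecurve t).Point := .some 0 0 (nonsingular (by ring))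
def Q : (Ecurve t).Point := .some (-1) 0 (nonsingular (by ring))
def R : (Ecurve t).Point := .some (-t ^ 2) 0 (nonsingular (by ring))
def P : (Ecurve t).Point := .some (-t) (t * (t - 1)) (nonsingular (by ring))
def S : (Ecurve t).Point := .some t (t * (t + 1)) (nonsingular (by ring))

lemma two_nsmul_T : 2 • T t = 0 :=
  two_nsmul (T t) ▸ Point.add_self_of_Y_eq (by simp [Ecurve, negY])

lemma two_nsmul_Q : 2 • Q t = 0 :=
  two_nsmul (Q t) ▸ Point.add_self_of_Y_eq (by simp [Ecurve, negY])

lemma two_nsmul_P : 2 • P t = T t := by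
  obtain ⟨h0, h1, -⟩ := isElliptic_iff.mp ‹_›
  have hy : t * (t - 1) ≠ (Ecurve t).negY (-t) (t * (t - 1)) := by
    simp only [Ecurve, negY]
    intro h
    exact mul_ne_zero h0 (sub_ne_zero.mpr h1) (by linear_combination h / 2)
  have hℓ : (Ecurve t).slope (-t) (-t) (t * (t - 1)) (t * (t - 1)) = 1 - t := by
    rw [slope_of_Y_ne rfl hy, div_eq_iff (sub_ne_zero.mpr hy)]
    simp only [Ecurve, negY]
    ring
  rw [two_nsmul, P, Point.add_self_of_Y_ne hy, T, Point.some.injEq, hℓ]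
  simp only [Ecurve, addX, addY, negAddY, negY]
  constructor <;> ring

lemma Q_add_P : Q t + P t = S t := by
  obtain ⟨-, h1, -⟩ := isElliptic_iff.mp ‹_›
  have hx : (-1 : ℚ) ≠ -t := neg_injective.ne h1.symm
  have hℓ : (Ecurve t).slope (-1) (-t) 0 (t * (t - 1)) = -t := by
    rw [slope_of_X_ne hx]
    field_simp [sub_ne_zero.mpr hx]
    ring
  rw [Q, P, Point.add_of_X_ne hx, S, Point.some.injEq, hℓ]
  simp only [Ecurve, addX, addY, negAddY, negY]
  constructor <;> ring

lemma Q_add_T : Q t + T t = R t := by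
  have hx : (-1 : ℚ) ≠ 0 := by norm_num
  rw [Q, T, Point.add_of_X_ne hx, R, Point.some.injEq, slope_of_X_ne hx]
  simp only [Ecurve, addX, addY, negAddY, negY]
  constructor <;> ring

lemma four_nsmul_P : 4 • P t = 0 := by
  rw [show 4 = 2 * 2 from rfl, mul_nsmul, two_nsmul_P, two_nsmul_T]

lemma three_nsmul_P : 3 • P t = -P t :=
  eq_neg_of_add_eq_zero_left (by rw [← succ_nsmul, four_nsmul_P])

lemma neg_P : -P t = .some (-t) (-(t * (t - 1))) (nonsingular (by ring)) := by
  rw [P, Point.neg_some, Point.some.injEq]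
  simp [Ecurve, negY]

lemma neg_S : -S t = .some t (-(t * (t + 1))) (nonsingular (by ring)) := by
  rw [S, Point.neg_some, Point.some.injEq]
  simp [Ecurve, negY]

lemma neg_Q : -Q t = Q t :=
  neg_eq_of_add_eq_zero_right (by rw [← two_nsmul, two_nsmul_Q])

lemma Q_add_neg_P : Q t + -P t = -S t := by
  rw [← Q_add_P, neg_add, neg_Q]

lemma mem_Aset_iff {X : (Ecurve t).Point} : X ∈ Aset t ↔
    X = 0 ∨ X = T t ∨ X = Q t ∨ X = R t ∨ X = P t ∨ X = -P t ∨ X = S t ∨ X = -S t := by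
  rw [Aset, Set.mem_ofPred_eq, neg_P, neg_S]
  simp only [Acoords, Set.mem_insert_iff, Set.mem_singleton_iff, Prod.mk.injEq, or_and_right,
    exists_or, and_assoc, exists_and_left, exists_eq_left, T, Q, R, P, S]
  grind

def torsionHom : ZMod 2 × ZMod 4 →+ (Ecurve t).Point :=
  zmodProdHom (Q t) (P t) (two_nsmul_Q t) (four_nsmul_P t)

lemma range_torsionHom : ((torsionHom t).range : Set (Ecurve t).Point) = Aset t := by
  ext X
  rw [SetLike.mem_coe, torsionHom, mem_range_zmodProdHom, mem_Aset_iff]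
  constructor
  · rintro ⟨i, hi, j, hj, rfl⟩
    interval_cases i <;> interval_cases j <;>
      simp [two_nsmul_P, three_nsmul_P, Q_add_P, Q_add_T, Q_add_neg_P]
  · rintro (rfl | rfl | rfl | rfl | rfl | rfl | rfl | rfl)
    exacts [⟨0, by norm_num, 0, by norm_num, by simp⟩,
      ⟨0, by norm_num, 2, by norm_num, by simp [two_nsmul_P]⟩,
      ⟨1, by norm_num, 0, by norm_num, by simp⟩,
      ⟨1, by norm_num, 2, by norm_num, by simp [two_nsmul_P, Q_add_T]⟩,
      ⟨0, by norm_num, 1, by norm_num, by simp⟩,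
      ⟨0, by norm_num, 3, by norm_num, by simp [three_nsmul_P]⟩,
      ⟨1, by norm_num, 1, by norm_num, by simp [Q_add_P]⟩,
      ⟨1, by norm_num, 3, by norm_num, by simp [three_nsmul_P, Q_add_neg_P]⟩]

lemma injective_torsionHom : Function.Injective (torsionHom t) := by
  refine injective_zmodProdHom _ _ fun i hi j hj h => ?_
  interval_cases i <;> interval_cases j <;>
      simp only [zero_nsmul, one_nsmul, zero_add, add_zero, two_nsmul_P, three_nsmul_P, Q_add_P,
        Q_add_T, Q_add_neg_P, neg_eq_zero, one_ne_zero, OfNat.ofNat_ne_zero, and_self, and_false,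
        and_true] at h ⊢ <;>
    exact Point.some_ne_zero _ h


lemma nonsingular_of_mem_Acoords : ∀ p ∈ Acoords t, (Ecurve t).Nonsingular p.1 p.2 := by
  simp only [Acoords, Set.mem_insert_iff, Set.mem_singleton_iff]
  rintro _ (rfl | rfl | rfl | rfl | rfl | rfl | rfl) <;> exact nonsingular (by ring)

end Ecurve

theorem statement0 (t : ℚ) (ht1 : t ≠ -1) (ht0 : t ≠ 0) (ht1' : t ≠ 1) :
    (∀ p ∈ Acoords t, (Ecurve t).Nonsingular p.1 p.2) ∧
    ∃ H : AddSubgroup (Ecurve t).Point,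
      (H : Set (Ecurve t).Point) = Aset t ∧ Nonempty (H ≃+ ZMod 2 × ZMod 4) := by
  have : (Ecurve t).IsElliptic := Ecurve.isElliptic_iff.mpr ⟨ht0, ht1', ht1⟩
  exact ⟨Ecurve.nonsingular_of_mem_Acoords t, (Ecurve.torsionHom t).range,
    Ecurve.range_torsionHom t, ⟨(AddMonoidHom.ofInjective (Ecurve.injective_torsionHom t)).symm⟩⟩
end
end

section
/- Let t ∈ ℚ with t > 0 and t ≠ 1. Then 𝒮_t is nonempty if and only if E_t(ℚ) \ A_t is nonempty, i.e. if and only if E_t(ℚ) contains a rational point not belonging to A_t. -/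
open WeierstrassCurve WeierstrassCurve.Affine

noncomputable section

/-- `𝒮_t`: triples `(a, b, c)` of positive rationals with `1 + a² = b²` and `t² + a² = c²`. -/
def Sset (t : ℚ) : Set (ℚ × ℚ × ℚ) :=
  {p | 0 < p.1 ∧ 0 < p.2.1 ∧ 0 < p.2.2 ∧
    1 + p.1 ^ 2 = p.2.1 ^ 2 ∧ t ^ 2 + p.1 ^ 2 = p.2.2 ^ 2}


/-! The map `(a, b, c) ↦ (x, y) = ((a + b)(a + c), (a + b)(b + c)(c + a))` sends `𝒮_t` into
`E_t(ℚ) \ A_t`: the factors of `x (x + 1) (x + t²)` are `x + 1 = (b + a)(b + c)` and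
`x + t² = (c + a)(c + b)`, so `y² = x (x + 1) (x + t²)`, and `x² - t² = 2 a y ≠ 0`.
Conversely a point `(x, y)` with `y ≠ 0` and `x² ≠ t²`, which is what lying outside `A_t`
amounts to, gives back `a = (x² - t²) / (2y)`, `b = (x² + 2x + t²) / (2y)`,
`c = (x² + 2t²x + t²) / (2y)` up to sign. -/

lemma Ecurve_equation_iff {t x y : ℚ} :
    (Ecurve t).Equation x y ↔ y ^ 2 = x * (x + 1) * (x + t ^ 2) := by
  rw [equation_iff]
  simp only [Ecurve]
  constructor <;> intro h <;> linear_combination h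

lemma Ecurve_nonsingular_of_ne_zero {t x y : ℚ} (h : (Ecurve t).Equation x y) (hy : y ≠ 0) :
    (Ecurve t).Nonsingular x y :=
  (nonsingular_iff' x y).2 ⟨h, Or.inr (by simpa [Ecurve] using hy)⟩

lemma mem_Acoords_iff_of_equation {t x y : ℚ} (h : (Ecurve t).Equation x y) :
    (x, y) ∈ Acoords t ↔ y = 0 ∨ x ^ 2 = t ^ 2 := by
  rw [Ecurve_equation_iff] at h
  simp only [Acoords, Set.mem_insert_iff, Set.mem_singleton_iff, Prod.mk.injEq]
  constructor
  · rintro (⟨-, rfl⟩ | ⟨-, rfl⟩ | ⟨-, rfl⟩ | ⟨rfl, -⟩ | ⟨rfl, -⟩ | ⟨rfl, -⟩ | ⟨rfl, -⟩) <;>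
      simp
  · rintro (rfl | hx)
    · have : x * (x + 1) * (x + t ^ 2) = 0 := by linear_combination -h
      rcases mul_eq_zero.1 this with hx | hx
      · rcases mul_eq_zero.1 hx with hx | hx
        · simp [hx]
        · simp [eq_neg_of_add_eq_zero_left hx]
      · simp [eq_neg_of_add_eq_zero_left hx]
    · rcases sq_eq_sq_iff_eq_or_eq_neg.1 hx with rfl | rfl
      · have : y ^ 2 = (x * (x + 1)) ^ 2 := by linear_combination h
        rcases sq_eq_sq_iff_eq_or_eq_neg.1 this with hy | hy <;> simp [hy]
      · have : y ^ 2 = (t * (t - 1)) ^ 2 := by linear_combination h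
        rcases sq_eq_sq_iff_eq_or_eq_neg.1 this with hy | hy <;> simp [hy]

lemma some_mem_Aset_iff {t x y : ℚ} (h : (Ecurve t).Nonsingular x y) :
    Point.some x y h ∈ Aset t ↔ (x, y) ∈ Acoords t := by
  refine ⟨?_, fun hm => Or.inr ⟨x, y, h, hm, rfl⟩⟩
  rintro (h0 | ⟨x', y', _, hm, he⟩)
  · exact absurd h0 (Point.some_ne_zero h)
  · obtain ⟨rfl, rfl⟩ := Point.some.inj he
    exact hm

lemma exists_notMem_Aset_iff {t : ℚ} : (∃ P : (Ecurve t).Point, P ∉ Aset t) ↔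
    ∃ x y : ℚ, (Ecurve t).Equation x y ∧ y ≠ 0 ∧ x ^ 2 ≠ t ^ 2 := by
  constructor
  · rintro ⟨_ | @⟨x, y, h⟩, hP⟩
    · exact absurd (Or.inl rfl) hP
    · rw [some_mem_Aset_iff, mem_Acoords_iff_of_equation h.1, not_or] at hP
      exact ⟨_, _, h.1, hP⟩
  · rintro ⟨x, y, h, hy, hx⟩
    refine ⟨.some x y (Ecurve_nonsingular_of_ne_zero h hy), ?_⟩
    rw [some_mem_Aset_iff, mem_Acoords_iff_of_equation h]
    tauto

lemma exists_equation_of_mem_Sset {t a b c : ℚ} (h : (a, b, c) ∈ Sset t) :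
    ∃ x y : ℚ, (Ecurve t).Equation x y ∧ y ≠ 0 ∧ x ^ 2 ≠ t ^ 2 := by
  obtain ⟨ha, hb, hc, hab, hac⟩ : 0 < a ∧ 0 < b ∧ 0 < c ∧ 1 + a ^ 2 = b ^ 2 ∧
    t ^ 2 + a ^ 2 = c ^ 2 := h
  have hy : 0 < (a + b) * (b + c) * (c + a) := by positivity
  refine ⟨(a + b) * (a + c), _, ?_, hy.ne', ?_⟩
  · have h1 : (a + b) * (a + c) + 1 = (b + a) * (b + c) := by linear_combination hab
    have h2 : (a + b) * (a + c) + t ^ 2 = (c + a) * (c + b) := by linear_combination hac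
    rw [Ecurve_equation_iff, h1, h2]
    ring
  · have : ((a + b) * (a + c)) ^ 2 - t ^ 2 = 2 * a * ((a + b) * (b + c) * (c + a)) := by
      linear_combination (a ^ 2 - c ^ 2) * hab - hac
    rw [ne_eq, ← sub_eq_zero, this]
    positivity

lemma Sset_nonempty_of_equation {t x y : ℚ} (h : (Ecurve t).Equation x y) (hy : y ≠ 0)
    (hx : x ^ 2 ≠ t ^ 2) : (Sset t).Nonempty := by
  rw [Ecurve_equation_iff] at h
  set u := (x ^ 2 - t ^ 2) / (2 * y)
  set v := (x ^ 2 + 2 * x + t ^ 2) / (2 * y)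
  set w := (x ^ 2 + 2 * t ^ 2 * x + t ^ 2) / (2 * y)
  have hu : u ≠ 0 := div_ne_zero (sub_ne_zero.2 hx) (mul_ne_zero two_ne_zero hy)
  have hv : 1 + u ^ 2 = v ^ 2 := by
    simp only [u, v]
    field_simp
    linear_combination 4 * h
  have hw : t ^ 2 + u ^ 2 = w ^ 2 := by
    simp only [u, w]
    field_simp
    linear_combination 4 * t ^ 2 * h
  clear_value u v w
  refine ⟨(|u|, |v|, |w|), abs_pos.2 hu, abs_pos.2 ?_, abs_pos.2 ?_, ?_, ?_⟩
  · rintro rfl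
    nlinarith [sq_nonneg u]
  · rintro rfl
    have : 0 < u ^ 2 := by positivity
    nlinarith [sq_nonneg t]
  all_goals simpa only [sq_abs]

theorem statement3_general (t : ℚ) :
    (Sset t).Nonempty ↔ ∃ P : (Ecurve t).Point, P ∉ Aset t := by
  rw [exists_notMem_Aset_iff]
  constructor
  · rintro ⟨⟨a, b, c⟩, habc⟩
    exact exists_equation_of_mem_Sset habc
  · rintro ⟨x, y, h, hy, hx⟩
    exact Sset_nonempty_of_equation h hy hx

theorem statement3 (t : ℚ) (ht : 0 < t) (ht1 : t ≠ 1) :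
    (Sset t).Nonempty ↔ ∃ P : (Ecurve t).Point, P ∉ Aset t :=
  statement3_general t
end
end

section
/- Let t ∈ ℚ with t > 0 and t ≠ 1. If the group E_t(ℚ) is infinite, then the set 𝒮_t is infinite; that is, the system 1+a² = b², t²+a² = c² has infinitely many solutions in positive rationals (a,b,c). -/
/-!
Away from finitely many `x`, a point `(x, y)` of `E_t` gives a triple
`(|a|, |b|, |c|) ∈ 𝒮_t` with `a = (x² - t²)/2y`, `b = (x² + 2x + t²)/2y`,
`c = (x² + 2t²x + t²)/2y`. This map is finite-to-one: `a` pins `x` down to the roots of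
the monic quartic `(x² - t²)² = 4a² x(x + 1)(x + t²)`, and `x` determines `y` up to sign.
So a finite `𝒮_t` would leave only finitely many points on `E_t`.
-/

open WeierstrassCurve WeierstrassCurve.Affine

noncomputable section

namespace WeierstrassCurve.Affine

variable {F : Type*} [CommRing F] [IsDomain F] (W : WeierstrassCurve.Affine F)

open Polynomial in
lemma finite_setOf_equation (x : F) : {y | W.Equation x y}.Finite := by
  have hmonic : (W.polynomial.map (evalRingHom x)).Monic := W.monic_polynomial.map _
  refine (finite_setOfPred_isRoot hmonic.ne_zero).subset fun y hy => ?_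
  rwa [Set.mem_ofPred_eq, IsRoot, map_evalRingHom_eval]

lemma finite_point_of_finite_setOf_equation (h : {x | ∃ y, W.Equation x y}.Finite) :
    Finite W.Point := by
  have hpairs : {xy : F × F | W.Nonsingular xy.1 xy.2}.Finite :=
    (h.biUnion fun x _ => (Set.finite_singleton x).prod (W.finite_setOf_equation x)).subset
      fun ⟨x, y⟩ hxy => Set.mem_biUnion ⟨y, hxy.1⟩ ⟨rfl, hxy.1⟩
  have : Finite {xy : F × F // W.Nonsingular xy.1 xy.2} := hpairs.to_subtype
  exact W.nonsingularPointEquiv.finite_iff.mpr (inferInstanceAs (Finite (Option _)))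

end WeierstrassCurve.Affine

lemma abs_mem_Sset {t a b c : ℚ} (ha : a ≠ 0) (hb : b ≠ 0) (hc : c ≠ 0)
    (hab : 1 + a ^ 2 = b ^ 2) (hac : t ^ 2 + a ^ 2 = c ^ 2) : (|a|, |b|, |c|) ∈ Sset t :=
  ⟨abs_pos.mpr ha, abs_pos.mpr hb, abs_pos.mpr hc, by simpa only [sq_abs] using hab,
    by simpa only [sq_abs] using hac⟩

/- With `a = (x² - t²)/2y`, `b = (x² + 2x + t²)/2y`, `c = (x² + 2t²x + t²)/2y`, the differences
factor as `(2y)²(b² - a²) = 2(x + t²) · 2x(x + 1)` and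
`(2y)²(c² - a²) = 2t²(x + 1) · 2x(x + t²)`. -/
lemma one_add_sq_eq_sq_and_sq_add_sq_eq_sq {t x y : ℚ} (hy : y ≠ 0)
    (hxy : y ^ 2 = x * (x + 1) * (x + t ^ 2)) :
    1 + ((x ^ 2 - t ^ 2) / (2 * y)) ^ 2 = ((x ^ 2 + 2 * x + t ^ 2) / (2 * y)) ^ 2 ∧
      t ^ 2 + ((x ^ 2 - t ^ 2) / (2 * y)) ^ 2 =
        ((x ^ 2 + 2 * t ^ 2 * x + t ^ 2) / (2 * y)) ^ 2 := by
  constructor <;> field_simp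
  · linear_combination 4 * hxy
  · linear_combination 4 * t ^ 2 * hxy

open Polynomial in
lemma finite_setOf_degenerate (t : ℚ) :
    {x : ℚ | x * (x + 1) * (x + t ^ 2) * ((x ^ 2 - t ^ 2) * (x ^ 2 + 2 * x + t ^ 2) *
      (x ^ 2 + 2 * t ^ 2 * x + t ^ 2)) = 0}.Finite := by
  have hmonic : (X * (X + 1) * (X + C (t ^ 2)) *
      ((X ^ 2 - C (t ^ 2)) * (X ^ 2 + 2 * X + C (t ^ 2)) *
        (X ^ 2 + C (2 * t ^ 2) * X + C (t ^ 2)))).Monic := by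
    monicity!
  refine (finite_setOfPred_isRoot hmonic.ne_zero).subset fun x hx => ?_
  simp only [Set.mem_ofPred_eq, IsRoot, eval_mul, eval_add, eval_sub, eval_pow, eval_X, eval_C,
    eval_one, eval_ofNat] at hx ⊢
  linear_combination hx

open Polynomial in
lemma finite_setOf_sq_sub_sq_eq (t a : ℚ) :
    {x : ℚ | (x ^ 2 - t ^ 2) ^ 2 = 4 * a ^ 2 * (x * (x + 1) * (x + t ^ 2))}.Finite := by
  have hmonic :
      ((X ^ 2 - C (t ^ 2)) ^ 2 - C (4 * a ^ 2) * (X * (X + 1) * (X + C (t ^ 2)))).Monic := by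
    monicity!
  refine (finite_setOfPred_isRoot hmonic.ne_zero).subset fun x hx => ?_
  simp only [Set.mem_ofPred_eq, IsRoot, eval_mul, eval_add, eval_sub, eval_pow, eval_X, eval_C,
    eval_one] at hx ⊢
  linear_combination hx

lemma finite_setOf_equation_Ecurve_of_finite_Sset {t : ℚ} (hS : (Sset t).Finite) :
    {x | ∃ y, (Ecurve t).Equation x y}.Finite := by
  refine ((finite_setOf_degenerate t).union
    (hS.biUnion fun s _ => finite_setOf_sq_sub_sq_eq t s.1)).subset ?_
  rintro x ⟨y, hxy⟩
  rw [Ecurve_equation_iff] at hxy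
  by_cases hdeg : x * (x + 1) * (x + t ^ 2) *
      ((x ^ 2 - t ^ 2) * (x ^ 2 + 2 * x + t ^ 2) * (x ^ 2 + 2 * t ^ 2 * x + t ^ 2)) = 0
  · exact Or.inl hdeg
  obtain ⟨hcubic, hquadratics⟩ := mul_ne_zero_iff.mp hdeg
  obtain ⟨⟨ha, hb⟩, hc⟩ := by simpa only [mul_ne_zero_iff] using hquadratics
  have hy : y ≠ 0 := fun h => hcubic (by rw [← hxy, h]; ring)
  have h2y : 2 * y ≠ 0 := mul_ne_zero two_ne_zero hy
  obtain ⟨hab, hac⟩ := one_add_sq_eq_sq_and_sq_add_sq_eq_sq hy hxy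
  refine Or.inr (Set.mem_biUnion (abs_mem_Sset (div_ne_zero ha h2y) (div_ne_zero hb h2y)
    (div_ne_zero hc h2y) hab hac) ?_)
  simp only [Set.mem_ofPred_eq, sq_abs]
  rw [← hxy]
  field_simp
  norm_num

theorem statement4_general (t : ℚ)
    (hinf : Infinite (Ecurve t).Point) : (Sset t).Infinite := by
  intro hS
  have : Finite (Ecurve t).Point :=
    (Ecurve t).finite_point_of_finite_setOf_equation
      (finite_setOf_equation_Ecurve_of_finite_Sset hS)
  exact not_finite (Ecurve t).Point

theorem statement4 (t : ℚ) (ht : 0 < t) (ht1 : t ≠ 1)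
    (hinf : Infinite (Ecurve t).Point) : (Sset t).Infinite :=
  statement4_general t hinf
end
end

section
/- Let t ∈ ℚ with t > 0 and t ≠ 1. The three involutions σ₁(r,s) = (−1/r, s), σ₂(r,s) = (r, −1/s), σ₃(r,s) = (−r, −s) map C_t'(ℚ) to itself and generate a group G of order 8 acting freely on C_t'(ℚ) (no nonidentity element of G fixes any point of C_t'(ℚ)); moreover, two points of C_t'(ℚ) lie in the same G-orbit if and only if they have the same image under Φ₂, where Φ₂(r,s) = (|1−r²|/|2r|, (1+r²)/|2r|, t(1+s²)/|2s|). -/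
/-!
Write `r = tan θ`, `s = tan φ`. Then `σ₁` and `σ₂` shift `θ`, resp. `φ`, by `π/2` and `σ₃` negates
both angles, so `Φ₂ = (|cot 2θ|, |csc 2θ|, t |csc 2φ|)` is invariant. The three involutions
commute, hence `G = {σ₁^a σ₂^b σ₃^c}`; these eight elements move `(2, 3)` to distinct points, and
a fixed point of a nontrivial one would have `r² = -1`, `s² = -1`, `r = 0`, `s = 0` or `r² = 1`.
Conversely `|csc 2θ|` determines `r` up to `r ↦ -r, ±1/r`, which is realised by `G`, and for fixed
`r` the equation of `C_t'` is a quadratic in `s` whose roots have product `-1`, i.e. `s` is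
determined up to `σ₂`.
-/

noncomputable section

/-- `C_t'(ℚ)`: pairs `(r, s)` with `r·s·(1−r²) ≠ 0` and `(1−r²)·s = t·r·(1−s²)`. -/
def Cset (t : ℚ) : Set (ℚ × ℚ) :=
  {p | p.1 * p.2 * (1 - p.1 ^ 2) ≠ 0 ∧
    (1 - p.1 ^ 2) * p.2 = t * p.1 * (1 - p.2 ^ 2)}

/-- The map `Φ₂ : (r, s) ↦ (|1−r²|/|2r|, (1+r²)/|2r|, t(1+s²)/|2s|)`. -/
def Phi2 (t : ℚ) (p : ℚ × ℚ) : ℚ × ℚ × ℚ :=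
  (|1 - p.1 ^ 2| / |2 * p.1|, (1 + p.1 ^ 2) / |2 * p.1|, t * (1 + p.2 ^ 2) / |2 * p.2|)

/-- The involution `σ₁ : (r, s) ↦ (−1/r, s)`. -/
def sigma1 : Equiv.Perm (ℚ × ℚ) :=
  Function.Involutive.toPerm (fun p => (-1 / p.1, p.2)) (by
    intro p
    simp [neg_div, one_div, inv_neg, inv_inv])

/-- The involution `σ₂ : (r, s) ↦ (r, −1/s)`. -/
def sigma2 : Equiv.Perm (ℚ × ℚ) :=
  Function.Involutive.toPerm (fun p => (p.1, -1 / p.2)) (by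
    intro p
    simp [neg_div, one_div, inv_neg, inv_inv])

/-- The involution `σ₃ : (r, s) ↦ (−r, −s)`. -/
def sigma3 : Equiv.Perm (ℚ × ℚ) :=
  Function.Involutive.toPerm (fun p => (-p.1, -p.2)) (by intro p; simp)

open Subgroup

section CommutingInvolutions

variable {G : Type*} [Group G]

def boolProd (a b c : G) (x : Bool × Bool × Bool) : G :=
  cond x.1 a 1 * cond x.2.1 b 1 * cond x.2.2 c 1

variable {a b c : G}

lemma boolProd_mem_closure (x : Bool × Bool × Bool) : boolProd a b c x ∈ closure {a, b, c} := by
  have hmem : ∀ (i : Bool) {g : G}, g ∈ ({a, b, c} : Set G) → cond i g 1 ∈ closure {a, b, c} :=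
    fun i _ hg => by cases i; exacts [one_mem _, subset_closure hg]
  exact mul_mem (mul_mem (hmem _ (by simp)) (hmem _ (by simp))) (hmem _ (by simp))

variable (ha : a * a = 1) (hb : b * b = 1) (hc : c * c = 1)
  (hab : Commute a b) (hac : Commute a c) (hbc : Commute b c)
include ha hb hc hab hac hbc

lemma mul_boolProd_mem_range {g : G} (hg : g ∈ ({a, b, c} : Set G)) (x : Bool × Bool × Bool) :
    g * boolProd a b c x ∈ Set.range (boolProd a b c) := by
  obtain ⟨i, j, k⟩ := x
  rcases hg with rfl | rfl | rfl
  · exact ⟨(!i, j, k), by cases i <;> simp [boolProd, ← mul_assoc, ha]⟩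
  · exact ⟨(i, !j, k), by cases i <;> cases j <;> simp [boolProd, ← mul_assoc, hb, hab.eq]⟩
  · refine ⟨(i, j, !k), ?_⟩
    cases i <;> cases j <;> cases k <;>
      simp [boolProd, ← mul_assoc, hc, hac.eq, hbc.eq, (hac.mul_left hbc).eq]

lemma coe_closure_eq_range_boolProd :
    (closure {a, b, c} : Set G) = Set.range (boolProd a b c) := by
  refine subset_antisymm (fun g hg => ?_) (Set.range_subset_iff.2 boolProd_mem_closure)
  induction hg using closure_induction_left with
  | one => exact ⟨(false, false, false), by simp [boolProd]⟩
  | mul_left g hg _ _ ih =>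
    obtain ⟨x, rfl⟩ := ih
    exact mul_boolProd_mem_range ha hb hc hab hac hbc hg x
  | inv_mul_cancel g hg _ _ ih =>
    obtain ⟨x, rfl⟩ := ih
    have hgg : g * g = 1 := by rcases hg with rfl | rfl | rfl <;> assumption
    rw [inv_eq_of_mul_eq_one_right hgg]
    exact mul_boolProd_mem_range ha hb hc hab hac hbc hg x

lemma card_closure_eq_eight (hinj : Function.Injective (boolProd a b c)) :
    Nat.card (closure {a, b, c}) = 8 := by
  rw [← SetLike.coe_sort_coe, coe_closure_eq_range_boolProd ha hb hc hab hac hbc,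
    Nat.card_range_of_injective hinj]
  simp

end CommutingInvolutions

lemma comp_eq_of_mem_closure {α β : Type*} {f : α → β} {s : Set (Equiv.Perm α)}
    (hs : ∀ g ∈ s, f ∘ g = f) {g : Equiv.Perm α} (hg : g ∈ closure s) : f ∘ g = f := by
  induction hg using closure_induction with
  | mem g hg => exact hs g hg
  | one => rfl
  | mul g h _ _ ihg ihh => rw [Equiv.Perm.coe_mul, ← Function.comp_assoc, ihg, ihh]
  | inv g _ ih => rw [← ih, Function.comp_assoc, Equiv.Perm.coe_inv, Equiv.self_comp_symm,
      Function.comp_id, ih]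

lemma comp_mem_eq_of_mapsTo {α : Type*} {C : Set α} {σ : Equiv.Perm α} (hσ : σ * σ = 1)
    (h : Set.MapsTo σ C C) : (· ∈ C) ∘ σ = (· ∈ C) :=
  funext fun p => propext ⟨fun hp => by simpa [← Equiv.Perm.mul_apply, hσ] using h hp, @h p⟩

section DoubleAngle

variable {K : Type*} [Field K]

-- For `x = tan θ`: `cotDouble x = cot 2θ` and `cscDouble x = csc 2θ`.
def cotDouble (x : K) : K := (1 - x ^ 2) / (2 * x)

def cscDouble (x : K) : K := (1 + x ^ 2) / (2 * x)

lemma cotDouble_neg (x : K) : cotDouble (-x) = -cotDouble x := by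
  simp [cotDouble, div_neg]

lemma cscDouble_neg (x : K) : cscDouble (-x) = -cscDouble x := by
  simp [cscDouble, div_neg]

lemma cotDouble_neg_one_div (x : K) : cotDouble (-1 / x) = cotDouble x := by
  rcases eq_or_ne x 0 with rfl | hx
  · simp [cotDouble]
  · unfold cotDouble
    field_simp
    ring

lemma cscDouble_neg_one_div (x : K) : cscDouble (-1 / x) = -cscDouble x := by
  rcases eq_or_ne x 0 with rfl | hx
  · simp [cscDouble]
  · unfold cscDouble
    field_simp
    ring

variable [LinearOrder K] [IsStrictOrderedRing K]

lemma neg_one_div_ne_self {x : K} (hx : x ≠ 0) : -1 / x ≠ x := by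
  intro h
  have hsq : x ^ 2 = -1 := by
    field_simp at h
    linear_combination -h
  nlinarith [sq_nonneg x]

lemma eq_or_eq_neg_or_eq_inv_or_eq_neg_inv_of_abs_cscDouble_eq {x y : K} (hx : x ≠ 0)
    (hy : y ≠ 0) (h : |cscDouble y| = |cscDouble x|) : y = x ∨ y = -x ∨ y = x⁻¹ ∨ y = -x⁻¹ := by
  unfold cscDouble at h
  rcases abs_eq_abs.1 h with h | h <;> field_simp at h
  · have hfac : (y - x) * (x * y - 1) = 0 := by linear_combination h
    rcases mul_eq_zero.1 hfac with h | h
    · exact Or.inl (sub_eq_zero.1 h)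
    · exact Or.inr (Or.inr (Or.inl (by field_simp; linear_combination h)))
  · have hfac : (y + x) * (x * y + 1) = 0 := by linear_combination h
    rcases mul_eq_zero.1 hfac with h | h
    · exact Or.inr (Or.inl (eq_neg_of_add_eq_zero_left h))
    · exact Or.inr (Or.inr (Or.inr (by field_simp; linear_combination h)))

end DoubleAngle

lemma phi2_eq (t : ℚ) (p : ℚ × ℚ) :
    Phi2 t p = (|cotDouble p.1|, |cscDouble p.1|, t * |cscDouble p.2|) := by
  simp only [Phi2, cotDouble, cscDouble, abs_div, mul_div_assoc,
    abs_of_nonneg (by positivity : (0 : ℚ) ≤ 1 + p.1 ^ 2),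
    abs_of_nonneg (by positivity : (0 : ℚ) ≤ 1 + p.2 ^ 2)]

lemma sigma1_apply (p : ℚ × ℚ) : sigma1 p = (-1 / p.1, p.2) := rfl
lemma sigma2_apply (p : ℚ × ℚ) : sigma2 p = (p.1, -1 / p.2) := rfl
lemma sigma3_apply (p : ℚ × ℚ) : sigma3 p = (-p.1, -p.2) := rfl

lemma phi2_comp_sigma1 (t : ℚ) : Phi2 t ∘ sigma1 = Phi2 t := by
  ext p <;> simp [phi2_eq, sigma1_apply, cotDouble_neg_one_div, cscDouble_neg_one_div]

lemma phi2_comp_sigma2 (t : ℚ) : Phi2 t ∘ sigma2 = Phi2 t := by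
  ext p <;> simp [phi2_eq, sigma2_apply, cscDouble_neg_one_div]

lemma phi2_comp_sigma3 (t : ℚ) : Phi2 t ∘ sigma3 = Phi2 t := by
  ext p <;> simp [phi2_eq, sigma3_apply, cotDouble_neg, cscDouble_neg]

lemma sigma1_mul_self : sigma1 * sigma1 = 1 := Equiv.ext fun p => by
  simp [Equiv.Perm.mul_apply, sigma1_apply]
lemma sigma2_mul_self : sigma2 * sigma2 = 1 := Equiv.ext fun p => by
  simp [Equiv.Perm.mul_apply, sigma2_apply]
lemma sigma3_mul_self : sigma3 * sigma3 = 1 := Equiv.ext fun p => by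
  simp [Equiv.Perm.mul_apply, sigma3_apply]

lemma commute_sigma1_sigma2 : Commute sigma1 sigma2 := Equiv.ext fun p => by
  simp [Equiv.Perm.mul_apply, sigma1_apply, sigma2_apply]
lemma commute_sigma1_sigma3 : Commute sigma1 sigma3 := Equiv.ext fun p => by
  simp [Equiv.Perm.mul_apply, sigma1_apply, sigma3_apply, neg_div]
lemma commute_sigma2_sigma3 : Commute sigma2 sigma3 := Equiv.ext fun p => by
  simp [Equiv.Perm.mul_apply, sigma2_apply, sigma3_apply, neg_div]

section Curve

variable {t : ℚ} {p q : ℚ × ℚ}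

lemma fst_ne_zero_of_mem_Cset (hp : p ∈ Cset t) : p.1 ≠ 0 :=
  left_ne_zero_of_mul (left_ne_zero_of_mul hp.1)

lemma snd_ne_zero_of_mem_Cset (hp : p ∈ Cset t) : p.2 ≠ 0 :=
  right_ne_zero_of_mul (left_ne_zero_of_mul hp.1)

lemma one_sub_fst_sq_ne_zero_of_mem_Cset (hp : p ∈ Cset t) : 1 - p.1 ^ 2 ≠ 0 :=
  right_ne_zero_of_mul hp.1

lemma sigma1_mem_Cset (hp : p ∈ Cset t) : sigma1 p ∈ Cset t := by
  have hr := fst_ne_zero_of_mem_Cset hp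
  have hs := snd_ne_zero_of_mem_Cset hp
  have hr1 := one_sub_fst_sq_ne_zero_of_mem_Cset hp
  refine ⟨?_, ?_⟩ <;> simp only [sigma1_apply]
  · have : 1 - (-1 / p.1) ^ 2 = -(1 - p.1 ^ 2) / p.1 ^ 2 := by field_simp; ring
    rw [this]
    exact mul_ne_zero (mul_ne_zero (by simpa using hr) hs)
      (div_ne_zero (neg_ne_zero.2 hr1) (pow_ne_zero 2 hr))
  · field_simp
    linear_combination -hp.2

lemma sigma2_mem_Cset (hp : p ∈ Cset t) : sigma2 p ∈ Cset t := by
  have hr := fst_ne_zero_of_mem_Cset hp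
  have hs := snd_ne_zero_of_mem_Cset hp
  have hr1 := one_sub_fst_sq_ne_zero_of_mem_Cset hp
  refine ⟨?_, ?_⟩ <;> simp only [sigma2_apply]
  · simp [hr, hs, hr1]
  · field_simp
    linear_combination -hp.2

lemma sigma3_mem_Cset (hp : p ∈ Cset t) : sigma3 p ∈ Cset t := by
  refine ⟨?_, ?_⟩ <;> simp only [sigma3_apply]
  · simpa using hp.1
  · linear_combination -hp.2

lemma eq_or_eq_sigma2_of_fst_eq (ht : t ≠ 0) (hp : p ∈ Cset t) (hq : q ∈ Cset t)
    (h : p.1 = q.1) : q = p ∨ q = sigma2 p := by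
  have hr := fst_ne_zero_of_mem_Cset hp
  have hs := snd_ne_zero_of_mem_Cset hp
  have hfac : t * p.1 * ((q.2 - p.2) * (p.2 * q.2 + 1)) = 0 := by
    have hp2 := hp.2
    rw [h] at hp2 ⊢
    linear_combination p.2 * hq.2 - q.2 * hp2
  rcases mul_eq_zero.1 hfac with h0 | h0
  · exact absurd h0 (mul_ne_zero ht hr)
  rcases mul_eq_zero.1 h0 with h0 | h0
  · exact Or.inl (Prod.ext h.symm (sub_eq_zero.1 h0))
  · refine Or.inr (Prod.ext h.symm ?_)
    simp only [sigma2_apply]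
    field_simp
    linear_combination h0

end Curve

abbrev sigmaGroup : Subgroup (Equiv.Perm (ℚ × ℚ)) := closure {sigma1, sigma2, sigma3}

lemma injective_boolProd_sigma : Function.Injective (boolProd sigma1 sigma2 sigma3) := by
  intro x y h
  have h23 := congrArg (fun g : Equiv.Perm (ℚ × ℚ) => g (2, 3)) h
  obtain ⟨_|_, _|_, _|_⟩ := x <;> obtain ⟨_|_, _|_, _|_⟩ := y <;>
    first
    | rfl
    | norm_num [boolProd, Equiv.Perm.mul_apply, sigma1_apply, sigma2_apply, sigma3_apply] at h23

lemma coe_sigmaGroup_eq_range : (sigmaGroup : Set (Equiv.Perm (ℚ × ℚ))) =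
    Set.range (boolProd sigma1 sigma2 sigma3) :=
  coe_closure_eq_range_boolProd sigma1_mul_self sigma2_mul_self sigma3_mul_self
    commute_sigma1_sigma2 commute_sigma1_sigma3 commute_sigma2_sigma3

lemma phi2_comp_of_mem_sigmaGroup (t : ℚ) {g : Equiv.Perm (ℚ × ℚ)} (hg : g ∈ sigmaGroup) :
    Phi2 t ∘ g = Phi2 t := by
  refine comp_eq_of_mem_closure (fun σ hσ => ?_) hg
  rcases hσ with rfl | rfl | rfl
  exacts [phi2_comp_sigma1 t, phi2_comp_sigma2 t, phi2_comp_sigma3 t]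

lemma apply_mem_Cset_of_mem_sigmaGroup {t : ℚ} {g : Equiv.Perm (ℚ × ℚ)} (hg : g ∈ sigmaGroup)
    {p : ℚ × ℚ} (hp : p ∈ Cset t) : g p ∈ Cset t := by
  have hinv : ∀ σ ∈ ({sigma1, sigma2, sigma3} : Set (Equiv.Perm (ℚ × ℚ))),
      (· ∈ Cset t) ∘ σ = (· ∈ Cset t) := by
    rintro σ (rfl | rfl | rfl)
    exacts [comp_mem_eq_of_mapsTo sigma1_mul_self fun _ => sigma1_mem_Cset,
      comp_mem_eq_of_mapsTo sigma2_mul_self fun _ => sigma2_mem_Cset,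
      comp_mem_eq_of_mapsTo sigma3_mul_self fun _ => sigma3_mem_Cset]
  exact (Iff.of_eq (congrFun (comp_eq_of_mem_closure hinv hg) p)).2 hp

lemma eq_one_of_mem_sigmaGroup_of_apply_eq {t : ℚ} {g : Equiv.Perm (ℚ × ℚ)} (hg : g ∈ sigmaGroup)
    {p : ℚ × ℚ} (hp : p ∈ Cset t) (hfix : g p = p) : g = 1 := by
  rw [← SetLike.mem_coe, coe_sigmaGroup_eq_range] at hg
  obtain ⟨x, rfl⟩ := hg
  have hr := fst_ne_zero_of_mem_Cset hp
  have hs := snd_ne_zero_of_mem_Cset hp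
  have hr_inv : p.1⁻¹ ≠ p.1 := by
    have := one_sub_fst_sq_ne_zero_of_mem_Cset hp
    rw [Ne, inv_eq_self₀]
    rintro (h | h | h) <;> simp [h] at this hr
  obtain ⟨_|_, _|_, _|_⟩ := x <;>
    simp [boolProd, Equiv.Perm.mul_apply, sigma1_apply, sigma2_apply, sigma3_apply, Prod.ext_iff,
      CharZero.neg_eq_self_iff, hr, hs, hr_inv, neg_one_div_ne_self hr, neg_one_div_ne_self hs]
      at hfix ⊢

lemma exists_mem_sigmaGroup_fst_eq {p : ℚ × ℚ} {u : ℚ} (hr : p.1 ≠ 0) (hu : u ≠ 0)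
    (h : |cscDouble u| = |cscDouble p.1|) : ∃ g ∈ sigmaGroup, (g p).1 = u := by
  have hσ1 : sigma1 ∈ sigmaGroup := subset_closure (by simp)
  have hσ3 : sigma3 ∈ sigmaGroup := subset_closure (by simp)
  rcases eq_or_eq_neg_or_eq_inv_or_eq_neg_inv_of_abs_cscDouble_eq hr hu h with
    rfl | rfl | rfl | rfl
  · exact ⟨1, one_mem _, rfl⟩
  · exact ⟨sigma3, hσ3, rfl⟩
  · exact ⟨sigma1 * sigma3, mul_mem hσ1 hσ3, by simp [sigma1_apply, sigma3_apply]⟩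
  · exact ⟨sigma1, hσ1, by simp [sigma1_apply, neg_div]⟩

lemma exists_mem_sigmaGroup_apply_eq_of_phi2_eq {t : ℚ} (ht : t ≠ 0) {p q : ℚ × ℚ}
    (hp : p ∈ Cset t) (hq : q ∈ Cset t) (h : Phi2 t p = Phi2 t q) :
    ∃ g ∈ sigmaGroup, g p = q := by
  have hcsc : |cscDouble q.1| = |cscDouble p.1| := by
    simpa [phi2_eq] using (congrArg (fun z => z.2.1) h).symm
  obtain ⟨g, hg, hfst⟩ :=
    exists_mem_sigmaGroup_fst_eq (fst_ne_zero_of_mem_Cset hp) (fst_ne_zero_of_mem_Cset hq) hcsc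
  rcases eq_or_eq_sigma2_of_fst_eq ht (apply_mem_Cset_of_mem_sigmaGroup hg hp) hq hfst with
    hq' | hq'
  · exact ⟨g, hg, hq'.symm⟩
  · exact ⟨sigma2 * g, mul_mem (subset_closure (by simp)) hg, hq'.symm⟩

theorem statement13_general (t : ℚ) (ht : 0 < t) :
    (∀ g ∈ ({sigma1, sigma2, sigma3} : Set (Equiv.Perm (ℚ × ℚ))),
      Set.MapsTo g (Cset t) (Cset t)) ∧
    Nat.card (Subgroup.closure ({sigma1, sigma2, sigma3} : Set (Equiv.Perm (ℚ × ℚ)))) = 8 ∧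
    (∀ g ∈ Subgroup.closure ({sigma1, sigma2, sigma3} : Set (Equiv.Perm (ℚ × ℚ))),
      g ≠ 1 → ∀ p ∈ Cset t, g p ≠ p) ∧
    (∀ p ∈ Cset t, ∀ q ∈ Cset t,
      ((∃ g ∈ Subgroup.closure ({sigma1, sigma2, sigma3} : Set (Equiv.Perm (ℚ × ℚ))),
        g p = q) ↔ Phi2 t p = Phi2 t q)) := by
  refine ⟨?_, ?_, ?_, fun p hp q hq =>
    ⟨?_, exists_mem_sigmaGroup_apply_eq_of_phi2_eq ht.ne' hp hq⟩⟩
  · rintro g (rfl | rfl | rfl) p hp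
    exacts [sigma1_mem_Cset hp, sigma2_mem_Cset hp, sigma3_mem_Cset hp]
  · exact card_closure_eq_eight sigma1_mul_self sigma2_mul_self sigma3_mul_self
      commute_sigma1_sigma2 commute_sigma1_sigma3 commute_sigma2_sigma3 injective_boolProd_sigma
  · exact fun g hg hne p hp hfix => hne (eq_one_of_mem_sigmaGroup_of_apply_eq hg hp hfix)
  · rintro ⟨g, hg, rfl⟩
    exact (congrFun (phi2_comp_of_mem_sigmaGroup t hg) p).symm

theorem statement13 (t : ℚ) (ht : 0 < t) (ht1 : t ≠ 1) :
    (∀ g ∈ ({sigma1, sigma2, sigma3} : Set (Equiv.Perm (ℚ × ℚ))),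
      Set.MapsTo g (Cset t) (Cset t)) ∧
    Nat.card (Subgroup.closure ({sigma1, sigma2, sigma3} : Set (Equiv.Perm (ℚ × ℚ)))) = 8 ∧
    (∀ g ∈ Subgroup.closure ({sigma1, sigma2, sigma3} : Set (Equiv.Perm (ℚ × ℚ))),
      g ≠ 1 → ∀ p ∈ Cset t, g p ≠ p) ∧
    (∀ p ∈ Cset t, ∀ q ∈ Cset t,
      ((∃ g ∈ Subgroup.closure ({sigma1, sigma2, sigma3} : Set (Equiv.Perm (ℚ × ℚ))),
        g p = q) ↔ Phi2 t p = Phi2 t q)) :=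
  statement13_general t ht
end
end

section
/- Let u and v be coprime integers, not both zero, with u ≠ ±v, u,v ≠ 0, and such that ord_2(uv) ≤ 1 (i.e. 4 does not divide uv). Consider the integral Weierstrass model W : y² = x³ + (u²+v²)x² + u²v²x over ℚ, whose discriminant is Δ = 16u⁴v⁴(u+v)²(u−v)². Then W is minimal at 2: for every admissible change of Weierstrass coordinates over ℚ (given by x = e²x′ + r, y = e³y′ + e²s·x′ + w with e ∈ ℚ^×, r,s,w ∈ ℚ) such that all coefficients a₁′, a₂′, a₃′, a₄′, a₆′ of the resulting Weierstrass equation have nonnegative 2-adic valuation, the 2-adic valuation of the discriminant Δ′ = Δ/e¹² of the resulting model satisfies ord_2(Δ′) ≥ ord_2(Δ). -/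
/-!
Since `Δ' = e⁻¹² Δ`, it suffices to show that no change of coordinates with `2 ∣ e` gives a model
with `2`-integral coefficients. Writing `e = 2f`, the transformation formulas express `s`, `t` and
`3r` through `f` and the new coefficients, so `r`, `s`, `t` are `2`-adic integers, and they force
`r`, `s` to satisfy three congruences modulo `8` which have no solution when `4 ∤ uv`.
-/

/-- The integral Weierstrass model `W : y² = x³ + (u²+v²)x² + u²v²x` over `ℚ`. -/
def Wmodel (u v : ℤ) : WeierstrassCurve ℚ :=
  { a₁ := 0, a₂ := (u : ℚ) ^ 2 + (v : ℚ) ^ 2, a₃ := 0, a₄ := (u : ℚ) ^ 2 * (v : ℚ) ^ 2,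
    a₆ := 0 }

namespace WeierstrassCurve

variable {R : Type*} [CommRing R] (W : WeierstrassCurve R) (C : VariableChange R)

lemma u_mul_variableChange_a₁ : C.u * (C • W).a₁ = W.a₁ + 2 * C.s := by
  rw [variableChange_a₁, ← mul_assoc, Units.mul_inv, one_mul]

lemma u_pow_two_mul_variableChange_a₂ :
    (C.u : R) ^ 2 * (C • W).a₂ = W.a₂ - C.s * W.a₁ + 3 * C.r - C.s ^ 2 := by
  rw [variableChange_a₂, ← mul_assoc, ← mul_pow, Units.mul_inv, one_pow, one_mul]

lemma u_pow_three_mul_variableChange_a₃ :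
    (C.u : R) ^ 3 * (C • W).a₃ = W.a₃ + C.r * W.a₁ + 2 * C.t := by
  rw [variableChange_a₃, ← mul_assoc, ← mul_pow, Units.mul_inv, one_pow, one_mul]

lemma u_pow_four_mul_variableChange_a₄ :
    (C.u : R) ^ 4 * (C • W).a₄ = W.a₄ - C.s * W.a₃ + 2 * C.r * W.a₂ - (C.t + C.r * C.s) * W.a₁ +
      3 * C.r ^ 2 - 2 * C.s * C.t := by
  rw [variableChange_a₄, ← mul_assoc, ← mul_pow, Units.mul_inv, one_pow, one_mul]

lemma u_pow_six_mul_variableChange_a₆ :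
    (C.u : R) ^ 6 * (C • W).a₆ = W.a₆ + C.r * W.a₄ + C.r ^ 2 * W.a₂ + C.r ^ 3 - C.t * W.a₃ -
      C.t ^ 2 - C.r * C.t * W.a₁ := by
  rw [variableChange_a₆, ← mul_assoc, ← mul_pow, Units.mul_inv, one_pow, one_mul]

theorem padicValRat_Δ_le_variableChange_Δ {p : ℕ} [Fact p.Prime]
    (W : WeierstrassCurve ℚ) (C : VariableChange ℚ) (hu : padicValRat p C.u ≤ 0) :
    padicValRat p W.Δ ≤ padicValRat p (C • W).Δ := by
  rw [variableChange_Δ, Units.val_inv_eq_inv_val]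
  rcases eq_or_ne W.Δ 0 with hΔ | hΔ
  · simp [hΔ]
  rw [padicValRat.mul (by simp) hΔ, padicValRat.pow, padicValRat.inv]
  push_cast
  linarith

end WeierstrassCurve

namespace PadicInt

variable {p : ℕ} [Fact p.Prime]

@[simp, norm_cast]
theorem coe_ofNat (n : ℕ) [n.AtLeastTwo] : ((ofNat(n) : ℤ_[p]) : ℚ_[p]) = ofNat(n) :=
  rfl

theorem exists_coe_eq_of_padicValRat_nonneg {x : ℚ} (hx : 0 ≤ padicValRat p x) :
    ∃ y : ℤ_[p], (y : ℚ_[p]) = x :=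
  ⟨⟨x, by rwa [Padic.norm_le_one_iff_val_nonneg, Padic.valuation_ratCast]⟩, rfl⟩

theorem exists_mul_eq_of_padicValRat_pos {x : ℚ} (hx : 0 < padicValRat p x) :
    ∃ y : ℤ_[p], (p : ℚ_[p]) * y = x := by
  have hx0 : x ≠ 0 := by
    rintro rfl
    simp at hx
  have hp := (Fact.out : p.Prime).ne_zero
  obtain ⟨y, hy⟩ := exists_coe_eq_of_padicValRat_nonneg (p := p) (x := x / p) (by
    rw [padicValRat.div hx0 (Nat.cast_ne_zero.mpr hp), padicValRat.self (Fact.out : p.Prime).one_lt]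
    omega)
  refine ⟨y, ?_⟩
  rw [hy]
  push_cast
  exact mul_div_cancel₀ _ (Nat.cast_ne_zero.mpr hp)

theorem exists_coe_eq_of_coe_eq_natCast_mul {n : ℕ} (hn : p.Coprime n) {x : ℚ_[p]} {y : ℤ_[p]}
    (h : (y : ℚ_[p]) = n * x) : ∃ z : ℤ_[p], (z : ℚ_[p]) = x := by
  refine ⟨⟨x, ?_⟩, rfl⟩
  have := y.norm_le_one
  rwa [norm_def, h, norm_mul, Padic.norm_natCast_eq_one_iff.mpr hn, one_mul] at this

theorem toZModPow_eq_zero_of_dvd {n : ℕ} {x : ℤ_[p]} (h : (p : ℤ_[p]) ^ n ∣ x) :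
    toZModPow n x = 0 := by
  rw [← RingHom.mem_ker, ker_toZModPow]
  exact Ideal.mem_span_singleton.mpr h

end PadicInt

open WeierstrassCurve

/- If `u`, `v` are odd, the third congruence makes `r` odd, the second then makes `s` odd and
`r ≡ 1 (mod 4)`, so `r (r + u²) (r + v²) ≡ 4 (mod 8)`. Otherwise `u²v² ≡ 4 (mod 8)`, and the left
side of the third congruence is odd for odd `r` and `≡ 4 (mod 8)` for even `r`. -/
theorem rescaling_congruences_mod_eight_unsolvable :
    ∀ u v r s : ZMod 8, 2 * (u * v) ≠ 0 →
    2 * (u ^ 2 + v ^ 2 + 3 * r - s ^ 2) = 0 →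
    u ^ 2 * v ^ 2 + 2 * r * (u ^ 2 + v ^ 2) + 3 * r ^ 2 = 0 →
    r * (r + u ^ 2) * (r + v ^ 2) ≠ 0 := by
  decide

theorem PadicInt.rescaling_congruences_unsolvable (u v : ℤ) (huv : ¬ 4 ∣ u * v) (r s : ℤ_[2])
    (h₂ : 4 ∣ (u : ℤ_[2]) ^ 2 + v ^ 2 + 3 * r - s ^ 2)
    (h₄ : 8 ∣ (u : ℤ_[2]) ^ 2 * v ^ 2 + 2 * r * (u ^ 2 + v ^ 2) + 3 * r ^ 2)
    (h₆ : 8 ∣ r * (r + (u : ℤ_[2]) ^ 2) * (r + v ^ 2)) : False := by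
  have h8 : ∀ {x : ℤ_[2]}, 8 ∣ x → toZModPow 3 x = 0 := fun h =>
    toZModPow_eq_zero_of_dvd (by norm_num [h])
  refine rescaling_congruences_mod_eight_unsolvable u v (toZModPow 3 r) (toZModPow 3 s) ?_ ?_ ?_ ?_
  · rw [← Int.cast_mul, ← Int.cast_ofNat, ← Int.cast_mul, ne_eq, ZMod.intCast_zmod_eq_zero_iff_dvd]
    omega
  · have h₂' : (8 : ℤ_[2]) ∣ 2 * ((u : ℤ_[2]) ^ 2 + v ^ 2 + 3 * r - s ^ 2) := by
      simpa only [show (8 : ℤ_[2]) = 2 * 4 by norm_num] using mul_dvd_mul_left 2 h₂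
    simpa only [map_add, map_mul, map_pow, map_sub, map_intCast, map_ofNat] using h8 h₂'
  · simpa only [map_add, map_mul, map_pow, map_intCast, map_ofNat] using h8 h₄
  · simpa only [map_add, map_mul, map_pow, map_intCast] using h8 h₆

theorem Wmodel_Δ (u v : ℤ) :
    (Wmodel u v).Δ = 16 * (u : ℚ) ^ 4 * (v : ℚ) ^ 4 * ((u : ℚ) + v) ^ 2 * ((u : ℚ) - v) ^ 2 := by
  simp only [Wmodel, Δ, b₂, b₄, b₆, b₈]
  ring

theorem Wmodel.padicValRat_u_nonpos_of_integral (u v : ℤ) (huv : ¬ 4 ∣ u * v)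
    (C : VariableChange ℚ)
    (hC : 0 ≤ padicValRat 2 (C • Wmodel u v).a₁ ∧ 0 ≤ padicValRat 2 (C • Wmodel u v).a₂ ∧
      0 ≤ padicValRat 2 (C • Wmodel u v).a₃ ∧ 0 ≤ padicValRat 2 (C • Wmodel u v).a₄ ∧
      0 ≤ padicValRat 2 (C • Wmodel u v).a₆) :
    padicValRat 2 (C.u : ℚ) ≤ 0 := by
  obtain ⟨h₁, h₂, h₃, h₄, h₆⟩ := hC
  by_contra! hu
  obtain ⟨f, he⟩ := PadicInt.exists_mul_eq_of_padicValRat_pos hu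
  obtain ⟨A₁, hA₁⟩ := PadicInt.exists_coe_eq_of_padicValRat_nonneg h₁
  obtain ⟨A₂, hA₂⟩ := PadicInt.exists_coe_eq_of_padicValRat_nonneg h₂
  obtain ⟨A₃, hA₃⟩ := PadicInt.exists_coe_eq_of_padicValRat_nonneg h₃
  obtain ⟨A₄, hA₄⟩ := PadicInt.exists_coe_eq_of_padicValRat_nonneg h₄
  obtain ⟨A₆, hA₆⟩ := PadicInt.exists_coe_eq_of_padicValRat_nonneg h₆
  have e₁ := congrArg (fun x : ℚ => (x : ℚ_[2])) ((Wmodel u v).u_mul_variableChange_a₁ C)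
  have e₂ := congrArg (fun x : ℚ => (x : ℚ_[2])) ((Wmodel u v).u_pow_two_mul_variableChange_a₂ C)
  have e₃ := congrArg (fun x : ℚ => (x : ℚ_[2])) ((Wmodel u v).u_pow_three_mul_variableChange_a₃ C)
  have e₄ := congrArg (fun x : ℚ => (x : ℚ_[2])) ((Wmodel u v).u_pow_four_mul_variableChange_a₄ C)
  have e₆ := congrArg (fun x : ℚ => (x : ℚ_[2])) ((Wmodel u v).u_pow_six_mul_variableChange_a₆ C)
  push_cast [← hA₁, ← hA₂, ← hA₃, ← hA₄, ← hA₆, ← he] at e₁ e₂ e₃ e₄ e₆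
  simp only [Wmodel, Rat.cast_zero, mul_zero, zero_add, add_zero, sub_zero] at e₁ e₂ e₃ e₄ e₆
  push_cast at e₂ e₄ e₆
  have hs : (C.s : ℚ_[2]) = f * A₁ := by linear_combination -e₁ / 2
  have ht : (C.t : ℚ_[2]) = 4 * f ^ 3 * A₃ := by linear_combination -e₃ / 2
  simp only [hs, ht] at e₂ e₄ e₆
  obtain ⟨r, hr⟩ : ∃ r : ℤ_[2], (r : ℚ_[2]) = C.r :=
    PadicInt.exists_coe_eq_of_coe_eq_natCast_mul (n := 3) (by decide)
      (y := 4 * f ^ 2 * A₂ - (u : ℤ_[2]) ^ 2 - (v : ℤ_[2]) ^ 2 + (f * A₁) ^ 2)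
      (by push_cast; linear_combination e₂)
  simp only [← hr] at e₂ e₄ e₆
  exact PadicInt.rescaling_congruences_unsolvable u v huv r (f * A₁)
    ⟨f ^ 2 * A₂, PadicInt.ext (by push_cast; linear_combination -e₂)⟩
    ⟨f ^ 4 * (A₁ * A₃ + 2 * A₄), PadicInt.ext (by push_cast; linear_combination -e₄)⟩
    ⟨f ^ 6 * (2 * A₃ ^ 2 + 8 * A₆), PadicInt.ext (by push_cast; linear_combination -e₆)⟩

theorem statement15_general (u v : ℤ) (h2 : ¬ (4 ∣ u * v)) :
    (Wmodel u v).Δ =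
      16 * (u : ℚ) ^ 4 * (v : ℚ) ^ 4 * ((u : ℚ) + v) ^ 2 * ((u : ℚ) - v) ^ 2 ∧
    ∀ C : WeierstrassCurve.VariableChange ℚ,
      (0 ≤ padicValRat 2 (C • Wmodel u v).a₁ ∧
       0 ≤ padicValRat 2 (C • Wmodel u v).a₂ ∧
       0 ≤ padicValRat 2 (C • Wmodel u v).a₃ ∧
       0 ≤ padicValRat 2 (C • Wmodel u v).a₄ ∧
       0 ≤ padicValRat 2 (C • Wmodel u v).a₆) →
      padicValRat 2 (Wmodel u v).Δ ≤ padicValRat 2 (C • Wmodel u v).Δ :=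
  ⟨Wmodel_Δ u v, fun C hC => (Wmodel u v).padicValRat_Δ_le_variableChange_Δ C
    (Wmodel.padicValRat_u_nonpos_of_integral u v h2 C hC)⟩

theorem statement15 (u v : ℤ) (hcop : IsCoprime u v) (hu : u ≠ 0) (hv : v ≠ 0)
    (huv : u ≠ v) (huv' : u ≠ -v) (h2 : ¬ (4 ∣ u * v)) :
    (Wmodel u v).Δ =
      16 * (u : ℚ) ^ 4 * (v : ℚ) ^ 4 * ((u : ℚ) + v) ^ 2 * ((u : ℚ) - v) ^ 2 ∧
    ∀ C : WeierstrassCurve.VariableChange ℚ,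
      (0 ≤ padicValRat 2 (C • Wmodel u v).a₁ ∧
       0 ≤ padicValRat 2 (C • Wmodel u v).a₂ ∧
       0 ≤ padicValRat 2 (C • Wmodel u v).a₃ ∧
       0 ≤ padicValRat 2 (C • Wmodel u v).a₄ ∧
       0 ≤ padicValRat 2 (C • Wmodel u v).a₆) →
      padicValRat 2 (Wmodel u v).Δ ≤ padicValRat 2 (C • Wmodel u v).Δ :=
  statement15_general u v h2
end
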